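/- In every 3-edge-coloring of K_n (n ≥ 6), some color class induces a subgraph with at most ⌊n/6⌋ + 1 connected components. -/

import Mathlib

/-- The simple graph on `Fin n` induced by the color class `i` of the edge
coloring `c` of the complete graph `K_n`. -/
def colorClass {n k : ℕ} (c : Sym2 (Fin n) → Fin k) (i : Fin k) :
    SimpleGraph (Fin n) where
  Adj u v := u ≠ v ∧ c s(u, v) = i
  symm := by
    constructor
    intro u v h
    exact ⟨h.1.symm, by rw [Sym2.eq_swap]; exact h.2⟩
  loopless := by
    constructor
    intro u h
    exact h.1 rfl

/-- The number of connected components containing at least one edge. -/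
noncomputable def numEdgeComps {n : ℕ} (G : SimpleGraph (Fin n)) : ℕ :=
  Nat.card {C : G.ConnectedComponent //
    ∃ u v : Fin n, G.Adj u v ∧ G.connectedComponentMk u = C}

/-- Color `i` is used on some edge of `K_n`. -/
def usedColor {n k : ℕ} (c : Sym2 (Fin n) → Fin k) (i : Fin k) : Prop :=
  ∃ u v : Fin n, u ≠ v ∧ c s(u, v) = i

/-- The minimum, over used colors, of the number of components of the
corresponding color class. -/
noncomputable def minComps {n k : ℕ} (c : Sym2 (Fin n) → Fin k) : ℕ :=
  sInf ((fun i => numEdgeComps (colorClass c i)) '' {i | usedColor c i})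

/-- `f_k(K_n)`: the maximum over `k`-edge-colorings of `K_n` of the minimum,
over used colors, of the number of components of the color class. -/
noncomputable def fGraph (n k : ℕ) : ℕ :=
  sSup (Set.range fun c : Sym2 (Fin n) → Fin k => minComps c)

/-
Reachability in the three color classes gives equivalence relations r₁, r₂, r₃ on the vertices,
and any two distinct vertices are related by one of them. If a color is unused, the two others
cover all pairs and one of them is connected. Otherwise assume every class has at least
⌊n/6⌋ + 2 ≥ 3 edge-components. If every r₁-class met every r₂-class, r₃ would be total; so some
r₁-class and r₂-class are disjoint, and then their union lies in one r₃-class K₃, the same for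
every such disjoint pair. Define K₁ and K₂ likewise, cyclically. A vertex v ∉ K₃ has an r₁-class
meeting every r₂-class, in particular the r₂-class of a point of a disjoint (r₂, r₃)-pair, which
lies in K₁; hence v ∈ K₁. So every vertex lies in two of K₁, K₂, K₃, the complements of the Kᵢ
are disjoint, and their sizes add up to at most n. But every edge-component outside Kᵢ has two
vertices, so the complement of Kᵢ has at least 2(⌊n/6⌋ + 1) vertices, and 6(⌊n/6⌋ + 1) > n.
-/

section ThreeEquivalences

variable {α : Type*} {r₁ r₂ r₃ : α → α → Prop}

def DisjointClasses (r₁ r₂ : α → α → Prop) (x y : α) : Prop :=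
  ∀ w, r₁ x w → ¬ r₂ y w

def HasThreeClasses (r : α → α → Prop) : Prop :=
  ∃ x₁ x₂ x₃, ¬ r x₁ x₂ ∧ ¬ r x₁ x₃ ∧ ¬ r x₂ x₃

lemma total_or_total_of_cover (e₁ : Equivalence r₁) (e₂ : Equivalence r₂)
    (cov : ∀ x y, x ≠ y → r₁ x y ∨ r₂ x y) : (∀ x y, r₁ x y) ∨ (∀ x y, r₂ x y) := by
  by_contra! ⟨⟨a, b, hab⟩, c, d, hcd⟩
  have of_not : ∀ x y, ¬ r₁ x y → r₂ x y := fun x y h =>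
    (cov x y fun hxy => h (hxy ▸ e₁.refl x)).resolve_left h
  have ha : ∀ u, r₂ a u := fun u => by
    by_cases hau : r₁ a u
    · exact e₂.trans (of_not a b hab) (of_not b u fun hbu => hab (e₁.trans hau (e₁.symm hbu)))
    · exact of_not a u hau
  exact hcd (e₂.trans (e₂.symm (ha c)) (ha d))

lemma third_of_not_of_not (e₁ : Equivalence r₁) (cov : ∀ x y, x ≠ y → r₁ x y ∨ r₂ x y ∨ r₃ x y)
    {x y : α} (h₁ : ¬ r₁ x y) (h₂ : ¬ r₂ x y) : r₃ x y :=
  ((cov x y fun h => h₁ (h ▸ e₁.refl x)).resolve_left h₁).resolve_left h₂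

lemma HasThreeClasses.exists_not_rel_not_rel {r : α → α → Prop} (e : Equivalence r)
    (h : HasThreeClasses r) (u v : α) : ∃ x, ¬ r u x ∧ ¬ r v x := by
  obtain ⟨x₁, x₂, x₃, h₁₂, h₁₃, h₂₃⟩ := h
  by_contra! hcov
  have join : ∀ {a b c}, r a b → r a c → r b c := fun hab hac => e.trans (e.symm hab) hac
  by_cases hu₁ : r u x₁
  · exact h₂₃ (join (hcov x₂ fun h => h₁₂ (join hu₁ h)) (hcov x₃ fun h => h₁₃ (join hu₁ h)))
  · have hv₁ := hcov x₁ hu₁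
    have hu₂ : r u x₂ := by_contra fun h => h₁₂ (join hv₁ (hcov x₂ h))
    have hu₃ : r u x₃ := by_contra fun h => h₁₃ (join hv₁ (hcov x₃ h))
    exact h₂₃ (join hu₂ hu₃)

lemma DisjointClasses.third (e₁ : Equivalence r₁) (e₂ : Equivalence r₂) (e₃ : Equivalence r₃)
    (cov : ∀ x y, x ≠ y → r₁ x y ∨ r₂ x y ∨ r₃ x y) {x y : α} (hd : DisjointClasses r₁ r₂ x y)
    {w : α} (hw : r₁ x w ∨ r₂ y w) : r₃ x w := by
  have of_r₂ : ∀ {w}, r₂ y w → r₃ x w := fun {w} hw =>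
    third_of_not_of_not e₁ cov (fun h => hd w h hw)
      (fun h => hd x (e₁.refl x) (e₂.trans hw (e₂.symm h)))
  rcases hw with hw | hw
  · have hwy : r₃ w y := third_of_not_of_not e₁ cov
      (fun h => hd y (e₁.trans hw h) (e₂.refl y)) (fun h => hd w hw (e₂.symm h))
    exact e₃.trans (of_r₂ (e₂.refl y)) (e₃.symm hwy)
  · exact of_r₂ hw

lemma DisjointClasses.third_of_disjointClasses (e₁ : Equivalence r₁) (e₂ : Equivalence r₂)
    (e₃ : Equivalence r₃) (cov : ∀ x y, x ≠ y → r₁ x y ∨ r₂ x y ∨ r₃ x y) {x y x' y' : α}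
    (hd : DisjointClasses r₁ r₂ x y) (hd' : DisjointClasses r₁ r₂ x' y') : r₃ x x' := by
  by_cases hxy' : DisjointClasses r₁ r₂ x y'
  · exact e₃.trans (hxy'.third e₁ e₂ e₃ cov (.inr (e₂.refl y')))
      (e₃.symm (hd'.third e₁ e₂ e₃ cov (.inr (e₂.refl y'))))
  · obtain ⟨w, hxw, hy'w⟩ : ∃ w, r₁ x w ∧ r₂ y' w := by
      simpa [DisjointClasses] using hxy'
    exact e₃.trans (hd.third e₁ e₂ e₃ cov (.inl hxw))
      (e₃.symm (hd'.third e₁ e₂ e₃ cov (.inr hy'w)))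

lemma exists_disjointClasses (e₁ : Equivalence r₁) (e₂ : Equivalence r₂)
    (e₃ : Equivalence r₃) (cov : ∀ x y, x ≠ y → r₁ x y ∨ r₂ x y ∨ r₃ x y) (h₁ : HasThreeClasses r₁)
    (h₂ : HasThreeClasses r₂) (h₃ : HasThreeClasses r₃) : ∃ x y, DisjointClasses r₁ r₂ x y := by
  by_contra! hmeet
  simp only [DisjointClasses, not_forall, not_not, exists_prop] at hmeet
  have hr₃ : ∀ u v, r₃ u v := by
    intro u v
    obtain ⟨x, hux, hvx⟩ := h₁.exists_not_rel_not_rel e₁ u v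
    obtain ⟨y, huy, hvy⟩ := h₂.exists_not_rel_not_rel e₂ u v
    obtain ⟨w, hxw, hyw⟩ := hmeet x y
    have to_w : ∀ {z}, ¬ r₁ z x → ¬ r₂ z y → r₃ z w := fun hzx hzy =>
      third_of_not_of_not e₁ cov (fun h => hzx (e₁.trans h (e₁.symm hxw)))
        (fun h => hzy (e₂.trans h (e₂.symm hyw)))
    exact e₃.trans (to_w hux huy) (e₃.symm (to_w hvx hvy))
  obtain ⟨x₁, x₂, -, h₁₂, -, -⟩ := h₃
  exact h₁₂ (hr₃ x₁ x₂)

lemma DisjointClasses.rel_of_not_rel (e₁ : Equivalence r₁) (e₂ : Equivalence r₂)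
    (e₃ : Equivalence r₃) (cov : ∀ x y, x ≠ y → r₁ x y ∨ r₂ x y ∨ r₃ x y) {x y p q v : α}
    (hxy : DisjointClasses r₁ r₂ x y) (hpq : DisjointClasses r₂ r₃ p q) (hv : ¬ r₃ x v) :
    r₁ p v := by
  obtain ⟨w, hvw, hpw⟩ : ∃ w, r₁ v w ∧ r₂ p w := by
    by_contra! hvp
    exact hv (hxy.third_of_disjointClasses e₁ e₂ e₃ cov hvp)
  have hpw' : r₁ p w := hpq.third e₂ e₃ e₁ (fun x y h => (cov x y h).rotate) (.inl hpw)
  exact e₁.trans hpw' (e₁.symm hvw)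

theorem exists_pairwise_cover (e₁ : Equivalence r₁) (e₂ : Equivalence r₂)
    (e₃ : Equivalence r₃) (cov : ∀ x y, x ≠ y → r₁ x y ∨ r₂ x y ∨ r₃ x y)
    (h₁ : HasThreeClasses r₁) (h₂ : HasThreeClasses r₂) (h₃ : HasThreeClasses r₃) :
    ∃ x₁ x₂ x₃, ∀ v, (r₁ x₁ v ∨ r₂ x₂ v) ∧ (r₂ x₂ v ∨ r₃ x₃ v) ∧ (r₃ x₃ v ∨ r₁ x₁ v) := by
  have cov' := fun x y h => (cov x y h).rotate
  have cov'' := fun x y h => (cov' x y h).rotate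
  obtain ⟨a, b, hab⟩ := exists_disjointClasses e₁ e₂ e₃ cov h₁ h₂ h₃
  obtain ⟨b', c, hbc⟩ := exists_disjointClasses e₂ e₃ e₁ cov' h₂ h₃ h₁
  obtain ⟨c', a', hca⟩ := exists_disjointClasses e₃ e₁ e₂ cov'' h₃ h₁ h₂
  refine ⟨b', c', a, fun v => ⟨?_, ?_, ?_⟩⟩ <;> rw [or_iff_not_imp_left]
  · exact hbc.rel_of_not_rel e₂ e₃ e₁ cov' hca
  · exact hca.rel_of_not_rel e₃ e₁ e₂ cov'' hab
  · exact hab.rel_of_not_rel e₁ e₂ e₃ cov hbc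

end ThreeEquivalences

section ColorClasses

open SimpleGraph

variable {n : ℕ}

lemma numEdgeComps_eq_ncard (G : SimpleGraph (Fin n)) :
    numEdgeComps G = (G.connectedComponentMk '' {u | ∃ v, G.Adj u v}).ncard := by
  rw [numEdgeComps, ← Nat.card_coe_set_eq]
  simp only [Set.image, Set.mem_ofPred_eq, exists_and_right]
  rfl

lemma numEdgeComps_le_one {G : SimpleGraph (Fin n)} (h : ∀ u v, G.Reachable u v) :
    numEdgeComps G ≤ 1 := by
  rw [numEdgeComps_eq_ncard, Set.ncard_le_one]
  rintro _ ⟨u, -, rfl⟩ _ ⟨v, -, rfl⟩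
  exact ConnectedComponent.sound (h u v)

lemma hasThreeClasses_of_three_le_numEdgeComps {G : SimpleGraph (Fin n)}
    (h : 3 ≤ numEdgeComps G) : HasThreeClasses G.Reachable := by
  rw [numEdgeComps_eq_ncard, Nat.succ_le_iff, Set.two_lt_ncard_iff] at h
  obtain ⟨_, _, _, ⟨u₁, -, rfl⟩, ⟨u₂, -, rfl⟩, ⟨u₃, -, rfl⟩, h₁₂, h₁₃, h₂₃⟩ := h
  exact ⟨u₁, u₂, u₃, fun h => h₁₂ (ConnectedComponent.sound h),
    fun h => h₁₃ (ConnectedComponent.sound h), fun h => h₂₃ (ConnectedComponent.sound h)⟩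

lemma two_mul_numEdgeComps_le (G : SimpleGraph (Fin n)) (x : Fin n) :
    2 * numEdgeComps G ≤ {u | ¬ G.Reachable x u}.ncard + 2 := by
  classical
  set A := Finset.univ.filter fun u => (∃ v, G.Adj u v) ∧ ¬ G.Reachable x u
  have hcomps : numEdgeComps G ≤ (A.image G.connectedComponentMk).card + 1 := by
    rw [numEdgeComps_eq_ncard, ← Set.ncard_coe_finset]
    refine (Set.ncard_le_ncard ?_).trans (Set.ncard_insert_le (G.connectedComponentMk x) _)
    rintro _ ⟨u, ⟨v, huv⟩, rfl⟩
    by_cases hxu : G.Reachable x u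
    · exact .inl (ConnectedComponent.sound hxu).symm
    · exact .inr (by simpa [A] using ⟨u, ⟨⟨v, huv⟩, hxu⟩, Reachable.rfl⟩)
  have hfibres : 2 * (A.image G.connectedComponentMk).card ≤ A.card := by
    refine Finset.mul_card_image_le_card A 2 fun C hC => ?_
    obtain ⟨u, hu, rfl⟩ := Finset.mem_image.1 hC
    obtain ⟨⟨v, huv⟩, hxu⟩ : (∃ v, G.Adj u v) ∧ ¬ G.Reachable x u := by simpa [A] using hu
    have hv : v ∈ A := by
      simpa [A] using ⟨⟨u, huv.symm⟩, fun hxv => hxu (hxv.trans huv.reachable.symm)⟩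
    refine Finset.one_lt_card.2 ⟨u, by simpa using hu, v, ?_, huv.ne⟩
    simpa [hv] using ConnectedComponent.sound huv.reachable.symm
  have hA : A.card ≤ {u | ¬ G.Reachable x u}.ncard := by
    rw [← Set.ncard_coe_finset]
    exact Set.ncard_le_ncard fun u hu => by simp_all [A]
  omega

lemma colorClass_reachable_of_ne (c : Sym2 (Fin n) → Fin 3) {u v : Fin n} (huv : u ≠ v) :
    (colorClass c 0).Reachable u v ∨ (colorClass c 1).Reachable u v ∨
      (colorClass c 2).Reachable u v := by
  have hadj : (colorClass c (c s(u, v))).Adj u v := ⟨huv, rfl⟩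
  generalize c s(u, v) = i at hadj
  fin_cases i
  exacts [.inl hadj.reachable, .inr (.inl hadj.reachable), .inr (.inr hadj.reachable)]

lemma exists_forall_reachable_of_not_usedColor {c : Sym2 (Fin n) → Fin 3} {k : Fin 3}
    (hk : ¬ usedColor c k) : ∃ i, ∀ u v, (colorClass c i).Reachable u v := by
  obtain ⟨i, j, hij⟩ : ∃ i j : Fin 3, ∀ m, m ≠ k → m = i ∨ m = j := by
    fin_cases k <;> decide
  have cov : ∀ u v, u ≠ v → (colorClass c i).Reachable u v ∨ (colorClass c j).Reachable u v := by
    intro u v huv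
    rcases hij _ fun h => hk ⟨u, v, huv, h⟩ with h | h
    · exact .inl (Adj.reachable (G := colorClass c i) ⟨huv, h⟩)
    · exact .inr (Adj.reachable (G := colorClass c j) ⟨huv, h⟩)
  rcases total_or_total_of_cover (colorClass c i).reachable_is_equivalence
    (colorClass c j).reachable_is_equivalence cov with h | h
  exacts [⟨i, h⟩, ⟨j, h⟩]

lemma usedColor_of_forall_reachable {c : Sym2 (Fin n) → Fin 3} {i : Fin 3} (hn : 2 ≤ n)
    (h : ∀ u v, (colorClass c i).Reachable u v) : usedColor c i := by
  obtain ⟨p⟩ := h ⟨0, by omega⟩ ⟨1, by omega⟩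
  exact ⟨_, _, p.adj_snd (Walk.not_nil_of_ne (by simp))⟩

end ColorClasses

lemma ncard_not_add_ncard_not_add_ncard_not_le {V : Type*} [Finite V] {p q r : V → Prop}
    (h : ∀ v, (p v ∨ q v) ∧ (q v ∨ r v) ∧ (r v ∨ p v)) :
    {v | ¬ p v}.ncard + {v | ¬ q v}.ncard + {v | ¬ r v}.ncard ≤ Nat.card V := by
  rw [← Set.ncard_union_eq, ← Set.ncard_union_eq]
  · exact Set.ncard_le_card _
  all_goals
    refine Set.disjoint_left.2 fun v => ?_
    simp only [Set.mem_union, Set.mem_ofPred_eq]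
    have := h v
    tauto

/-- In every 3-edge-coloring of `K_n` (`n ≥ 6`), some used color class
induces a subgraph with at most `⌊n/6⌋ + 1` connected components. -/
theorem f_three_upper (n : ℕ) (hn : 6 ≤ n) (c : Sym2 (Fin n) → Fin 3) :
    ∃ i : Fin 3, usedColor c i ∧ numEdgeComps (colorClass c i) ≤ n / 6 + 1 := by
  by_contra! hmany
  have hused : ∀ i, usedColor c i := fun k => by
    by_contra hk
    obtain ⟨i, hi⟩ := exists_forall_reachable_of_not_usedColor hk
    have := hmany i (usedColor_of_forall_reachable (by omega) hi)
    have := numEdgeComps_le_one hi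
    omega
  have hthree : ∀ i, HasThreeClasses (colorClass c i).Reachable := fun i =>
    hasThreeClasses_of_three_le_numEdgeComps (by have := hmany i (hused i); omega)
  obtain ⟨x₀, x₁, x₂, hcov⟩ := exists_pairwise_cover
    (colorClass c 0).reachable_is_equivalence (colorClass c 1).reachable_is_equivalence
    (colorClass c 2).reachable_is_equivalence (fun _ _ => colorClass_reachable_of_ne c)
    (hthree 0) (hthree 1) (hthree 2)
  have hcount := ncard_not_add_ncard_not_add_ncard_not_le hcov
  have h₀ := two_mul_numEdgeComps_le (colorClass c 0) x₀
  have h₁ := two_mul_numEdgeComps_le (colorClass c 1) x₁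
  have h₂ := two_mul_numEdgeComps_le (colorClass c 2) x₂
  have h₀' := hmany 0 (hused 0)
  have h₁' := hmany 1 (hused 1)
  have h₂' := hmany 2 (hused 2)
  rw [Nat.card_fin] at hcount
  omega
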